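/- The twelve sets S_alpha, S_beta, ..., S_mu defined in terms of the second-last column (simplex vs duplex), pivot cell membership, and edge-sharing conditions, form a partition of the set S of simplex-duplex polyominoes ending in a simplex column: they are pairwise disjoint and their union is S. -/
import Mathlib


/-!  Polyominoes are modelled as finite, edge-connected sets of unit cells.
`S` is the set of simplex-duplex polyominoes whose rightmost column (at
abscissa `xmax P`) is a simplex (connected) column.  Below we define the
twelve sets `S_α, ..., S_μ` of the paper and state that they partition `S`. -/


noncomputable def fmax (s : Finset ℤ) : ℤ := sSup (↑s : Set ℤ)
noncomputable def fmin (s : Finset ℤ) : ℤ := sInf (↑s : Set ℤ)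

def cellAdj (a b : ℤ × ℤ) : Prop :=
  (a.1 = b.1 ∧ (a.2 = b.2 + 1 ∨ b.2 = a.2 + 1)) ∨
  (a.2 = b.2 ∧ (a.1 = b.1 + 1 ∨ b.1 = a.1 + 1))

def IsPolyomino (P : Finset (ℤ × ℤ)) : Prop :=
  P.Nonempty ∧ ∀ a ∈ P, ∀ b ∈ P,
    Relation.ReflTransGen (fun u v => u ∈ P ∧ v ∈ P ∧ cellAdj u v) a b

def colP (P : Finset (ℤ × ℤ)) (x : ℤ) : Finset ℤ :=
  (P.filter (fun c => c.1 = x)).image Prod.snd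

def comps (s : Finset ℤ) : ℕ := (s.filter (fun y => y - 1 ∉ s)).card

def IsColumnDuplex (P : Finset (ℤ × ℤ)) : Prop :=
  IsPolyomino P ∧ ∀ x : ℤ, comps (colP P x) ≤ 2

def IsSimplexDuplex (P : Finset (ℤ × ℤ)) : Prop :=
  IsColumnDuplex P ∧ ∀ x : ℤ, comps (colP P x) = 2 →
    comps (colP P (x + 1)) ≤ 1 ∧ comps (colP P (x - 1)) ≤ 1

noncomputable def xmax (P : Finset (ℤ × ℤ)) : ℤ := fmax (P.image Prod.fst)

noncomputable def upBot (s : Finset ℤ) : ℤ := fmax (s.filter (fun y => y - 1 ∉ s))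
noncomputable def lowTop (s : Finset ℤ) : ℤ := fmax (s.filter (fun y => y < upBot s))
noncomputable def lowerComp (s : Finset ℤ) : Finset ℤ := s.filter (fun y => y ≤ lowTop s)
noncomputable def upperComp (s : Finset ℤ) : Finset ℤ := s.filter (fun y => upBot s ≤ y)
noncomputable def holeOf (s : Finset ℤ) : Finset ℤ := Finset.Ioo (lowTop s) (upBot s)
def sharesEdge (a b : Finset ℤ) : Prop := (a ∩ b).Nonempty

/-- Membership in the set `S`: a simplex-duplex polyomino ending in a simplex
column. -/
noncomputable def inS (P : Finset (ℤ × ℤ)) : Prop :=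
  IsSimplexDuplex P ∧ comps (colP P (xmax P)) = 1

/-- `P` has no other simplex column than the last one. -/
noncomputable def onlySimplexLast (P : Finset (ℤ × ℤ)) : Prop :=
  ∀ x : ℤ, comps (colP P x) = 1 → x = xmax P

/-- Abscissa of the second-last among the simplex columns of `P`. -/
noncomputable def sndSimplexX (P : Finset (ℤ × ℤ)) : ℤ :=
  fmax ((P.image Prod.fst).filter (fun x => x < xmax P ∧ comps (colP P x) = 1))

/-- Lower pivot cell: right neighbour of the bottom cell of the second-last
simplex column. -/
noncomputable def lowPivot (P : Finset (ℤ × ℤ)) : ℤ × ℤ :=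
  (sndSimplexX P + 1, fmin (colP P (sndSimplexX P)))

/-- Upper pivot cell: right neighbour of the top cell of the second-last
simplex column. -/
noncomputable def upPivot (P : Finset (ℤ × ℤ)) : ℤ × ℤ :=
  (sndSimplexX P + 1, fmax (colP P (sndSimplexX P)))

/-- Abscissa of the last among the duplex columns of `P`. -/
noncomputable def lastDupX (P : Finset (ℤ × ℤ)) : ℤ :=
  fmax ((P.image Prod.fst).filter (fun x => comps (colP P x) = 2))

/-- Lower inner pivot cell: right neighbour of the top cell of the lower
component of the last duplex column. -/
noncomputable def lowInnerPivot (P : Finset (ℤ × ℤ)) : ℤ × ℤ :=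
  (lastDupX P + 1, lowTop (colP P (lastDupX P)))

/-- Upper inner pivot cell: right neighbour of the bottom cell of the upper
component of the last duplex column. -/
noncomputable def upInnerPivot (P : Finset (ℤ × ℤ)) : ℤ × ℤ :=
  (lastDupX P + 1, upBot (colP P (lastDupX P)))

noncomputable def Salpha (P : Finset (ℤ × ℤ)) : Prop := inS P ∧ onlySimplexLast P

noncomputable def Sbeta (P : Finset (ℤ × ℤ)) : Prop :=
  inS P ∧ ¬ onlySimplexLast P ∧ comps (colP P (xmax P - 1)) = 1 ∧ lowPivot P ∈ P

noncomputable def Sgamma (P : Finset (ℤ × ℤ)) : Prop :=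
  inS P ∧ ¬ onlySimplexLast P ∧ comps (colP P (xmax P - 1)) = 1 ∧ lowPivot P ∉ P

noncomputable def Sdelta (P : Finset (ℤ × ℤ)) : Prop :=
  inS P ∧ ¬ onlySimplexLast P ∧ comps (colP P (xmax P - 1)) = 2 ∧
  comps (colP P (xmax P - 2)) = 1 ∧
  ¬ sharesEdge (lowerComp (colP P (xmax P - 1))) (colP P (xmax P - 2)) ∧
  (lowPivot P).2 ∈ upperComp (colP P (xmax P - 1))

noncomputable def Sepsilon (P : Finset (ℤ × ℤ)) : Prop :=
  inS P ∧ ¬ onlySimplexLast P ∧ comps (colP P (xmax P - 1)) = 2 ∧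
  comps (colP P (xmax P - 2)) = 1 ∧
  ¬ sharesEdge (lowerComp (colP P (xmax P - 1))) (colP P (xmax P - 2)) ∧
  (lowPivot P).2 ∈ holeOf (colP P (xmax P - 1))

noncomputable def Szeta (P : Finset (ℤ × ℤ)) : Prop :=
  inS P ∧ ¬ onlySimplexLast P ∧ comps (colP P (xmax P - 1)) = 2 ∧
  comps (colP P (xmax P - 2)) = 1 ∧
  ¬ sharesEdge (upperComp (colP P (xmax P - 1))) (colP P (xmax P - 2)) ∧
  (upPivot P).2 ∈ lowerComp (colP P (xmax P - 1))

noncomputable def Seta (P : Finset (ℤ × ℤ)) : Prop :=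
  inS P ∧ ¬ onlySimplexLast P ∧ comps (colP P (xmax P - 1)) = 2 ∧
  comps (colP P (xmax P - 2)) = 1 ∧
  ¬ sharesEdge (upperComp (colP P (xmax P - 1))) (colP P (xmax P - 2)) ∧
  (upPivot P).2 ∈ holeOf (colP P (xmax P - 1))

noncomputable def Stheta (P : Finset (ℤ × ℤ)) : Prop :=
  inS P ∧ ¬ onlySimplexLast P ∧ comps (colP P (xmax P - 1)) = 2 ∧
  comps (colP P (xmax P - 2)) = 1 ∧
  sharesEdge (lowerComp (colP P (xmax P - 1))) (colP P (xmax P - 2)) ∧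
  sharesEdge (upperComp (colP P (xmax P - 1))) (colP P (xmax P - 2)) ∧
  sharesEdge (colP P (xmax P)) (lowerComp (colP P (xmax P - 1))) ∧
  sharesEdge (colP P (xmax P)) (upperComp (colP P (xmax P - 1)))

noncomputable def Siota (P : Finset (ℤ × ℤ)) : Prop :=
  inS P ∧ ¬ onlySimplexLast P ∧ comps (colP P (xmax P - 1)) = 2 ∧
  comps (colP P (xmax P - 2)) = 1 ∧
  sharesEdge (lowerComp (colP P (xmax P - 1))) (colP P (xmax P - 2)) ∧
  sharesEdge (upperComp (colP P (xmax P - 1))) (colP P (xmax P - 2)) ∧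
  sharesEdge (colP P (xmax P)) (lowerComp (colP P (xmax P - 1))) ∧
  ¬ sharesEdge (colP P (xmax P)) (upperComp (colP P (xmax P - 1))) ∧
  lowInnerPivot P ∉ P

noncomputable def Skappa (P : Finset (ℤ × ℤ)) : Prop :=
  inS P ∧ ¬ onlySimplexLast P ∧ comps (colP P (xmax P - 1)) = 2 ∧
  comps (colP P (xmax P - 2)) = 1 ∧
  sharesEdge (lowerComp (colP P (xmax P - 1))) (colP P (xmax P - 2)) ∧
  sharesEdge (upperComp (colP P (xmax P - 1))) (colP P (xmax P - 2)) ∧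
  sharesEdge (colP P (xmax P)) (lowerComp (colP P (xmax P - 1))) ∧
  ¬ sharesEdge (colP P (xmax P)) (upperComp (colP P (xmax P - 1))) ∧
  lowInnerPivot P ∈ P

noncomputable def Slambda (P : Finset (ℤ × ℤ)) : Prop :=
  inS P ∧ ¬ onlySimplexLast P ∧ comps (colP P (xmax P - 1)) = 2 ∧
  comps (colP P (xmax P - 2)) = 1 ∧
  sharesEdge (lowerComp (colP P (xmax P - 1))) (colP P (xmax P - 2)) ∧
  sharesEdge (upperComp (colP P (xmax P - 1))) (colP P (xmax P - 2)) ∧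
  sharesEdge (colP P (xmax P)) (upperComp (colP P (xmax P - 1))) ∧
  ¬ sharesEdge (colP P (xmax P)) (lowerComp (colP P (xmax P - 1))) ∧
  upInnerPivot P ∉ P

noncomputable def Smu (P : Finset (ℤ × ℤ)) : Prop :=
  inS P ∧ ¬ onlySimplexLast P ∧ comps (colP P (xmax P - 1)) = 2 ∧
  comps (colP P (xmax P - 2)) = 1 ∧
  sharesEdge (lowerComp (colP P (xmax P - 1))) (colP P (xmax P - 2)) ∧
  sharesEdge (upperComp (colP P (xmax P - 1))) (colP P (xmax P - 2)) ∧
  sharesEdge (colP P (xmax P)) (upperComp (colP P (xmax P - 1))) ∧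
  ¬ sharesEdge (colP P (xmax P)) (lowerComp (colP P (xmax P - 1))) ∧
  upInnerPivot P ∈ P

/-- The twelve families indexed by `Fin 12`. -/
noncomputable def twelveSets : Fin 12 → (Finset (ℤ × ℤ) → Prop) :=
  ![Salpha, Sbeta, Sgamma, Sdelta, Sepsilon, Szeta, Seta, Stheta, Siota, Skappa,
    Slambda, Smu]

/-! ### Auxiliary lemmas -/

section Aux

lemma fmax_mem {s : Finset ℤ} (h : s.Nonempty) : fmax s ∈ s := by
  have : sSup (↑s : Set ℤ) ∈ (↑s : Set ℤ) :=
    Set.Nonempty.csSup_mem (by exact_mod_cast h) s.finite_toSet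
  exact_mod_cast this

lemma le_fmax {s : Finset ℤ} {a : ℤ} (ha : a ∈ s) : a ≤ fmax s :=
  le_csSup s.finite_toSet.bddAbove (by exact_mod_cast ha)

lemma fmin_mem {s : Finset ℤ} (h : s.Nonempty) : fmin s ∈ s := by
  have : sInf (↑s : Set ℤ) ∈ (↑s : Set ℤ) :=
    Set.Nonempty.csInf_mem (by exact_mod_cast h) s.finite_toSet
  exact_mod_cast this

lemma fmin_le {s : Finset ℤ} {a : ℤ} (ha : a ∈ s) : fmin s ≤ a :=
  csInf_le s.finite_toSet.bddBelow (by exact_mod_cast ha)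

lemma mem_colP {P : Finset (ℤ × ℤ)} {x y : ℤ} : y ∈ colP P x ↔ (x, y) ∈ P := by
  constructor
  · intro h
    simp only [colP, Finset.mem_image, Finset.mem_filter] at h
    obtain ⟨c, ⟨hc, hc1⟩, hc2⟩ := h
    have : c = (x, y) := Prod.ext hc1 hc2
    rwa [this] at hc
  · intro h
    simp only [colP, Finset.mem_image, Finset.mem_filter]
    exact ⟨(x, y), ⟨h, rfl⟩, rfl⟩

lemma nonempty_of_comps_ne {s : Finset ℤ} (h : comps s ≠ 0) : s.Nonempty := by
  by_contra hs
  rw [Finset.not_nonempty_iff_eq_empty] at hs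
  subst hs
  simp [comps] at h

lemma fmin_mem_starts {s : Finset ℤ} (h : s.Nonempty) :
    fmin s ∈ s.filter (fun y => y - 1 ∉ s) := by
  refine Finset.mem_filter.2 ⟨fmin_mem h, fun hc => ?_⟩
  have := fmin_le hc; omega

lemma comps_pos {s : Finset ℤ} (h : s.Nonempty) : 0 < comps s :=
  Finset.card_pos.2 ⟨_, fmin_mem_starts h⟩

lemma exists_start_aux (s : Finset ℤ) : ∀ (k : ℕ) (a : ℤ), a ∈ s → a - fmin s = (k : ℤ) →
    ∃ y, y ∈ s ∧ y - 1 ∉ s ∧ y ≤ a ∧ ∀ z, y ≤ z → z ≤ a → z ∈ s := by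
  intro k
  induction k with
  | zero =>
      intro a ha hk
      refine ⟨a, ha, fun hc => ?_, le_refl a, fun z h1 h2 => by rwa [le_antisymm h2 h1]⟩
      have := fmin_le hc; omega
  | succ n ih =>
      intro a ha hk
      by_cases h : a - 1 ∈ s
      · obtain ⟨y, hy1, hy2, hy3, hy4⟩ := ih (a - 1) h (by omega)
        refine ⟨y, hy1, hy2, by omega, fun z h1 h2 => ?_⟩
        rcases eq_or_lt_of_le h2 with h3 | h3
        · rwa [h3]
        · exact hy4 z h1 (by omega)
      · exact ⟨a, ha, h, le_refl a, fun z h1 h2 => by rwa [le_antisymm h2 h1]⟩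

lemma exists_start {s : Finset ℤ} {a : ℤ} (ha : a ∈ s) :
    ∃ y, y ∈ s ∧ y - 1 ∉ s ∧ y ≤ a ∧ ∀ z, y ≤ z → z ≤ a → z ∈ s := by
  refine exists_start_aux s (a - fmin s).toNat a ha ?_
  rw [Int.toNat_of_nonneg]
  have := fmin_le ha; omega

lemma interval_of_comps_one {t : Finset ℤ} (h1 : comps t = 1) {a b y : ℤ}
    (ha : a ∈ t) (hb : b ∈ t) (hay : a ≤ y) (hyb : y ≤ b) : y ∈ t := by
  by_contra hy
  obtain ⟨w, hw1, hw2, hw3, hw4⟩ := exists_start hb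
  have hyw : y < w := by
    by_contra hcon; push_neg at hcon; exact hy (hw4 y hcon hyb)
  have hfm := fmin_mem_starts ⟨a, ha⟩
  have hwm : w ∈ t.filter (fun y => y - 1 ∉ t) := Finset.mem_filter.2 ⟨hw1, hw2⟩
  have hfw : fmin t < w := lt_of_le_of_lt (fmin_le ha) (lt_of_le_of_lt hay hyw)
  have hsub : ({fmin t, w} : Finset ℤ) ⊆ t.filter (fun y => y - 1 ∉ t) := by
    intro z hz
    simp only [Finset.mem_insert, Finset.mem_singleton] at hz
    rcases hz with h | h <;> subst h <;> assumption
  have hc2 : ({fmin t, w} : Finset ℤ).card = 2 := by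
    rw [Finset.card_insert_of_notMem (by simp; omega), Finset.card_singleton]
  have hle := Finset.card_le_card hsub
  have hcc : (t.filter (fun y => y - 1 ∉ t)).card = 1 := h1
  omega

lemma comps_two_facts {s : Finset ℤ} (h2 : comps s = 2) :
    upBot s ∈ s ∧ upBot s - 1 ∉ s ∧ lowTop s ∈ s ∧ lowTop s < upBot s ∧
    (∀ y ∈ s, y < upBot s → y ≤ lowTop s) := by
  have hcard : (s.filter (fun y => y - 1 ∉ s)).card = 2 := h2
  have hstne : (s.filter (fun y => y - 1 ∉ s)).Nonempty := by
    rw [← Finset.card_pos, hcard]; norm_num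
  have hub : upBot s ∈ s.filter (fun y => y - 1 ∉ s) := fmax_mem hstne
  have hub' := hub
  rw [Finset.mem_filter] at hub'
  obtain ⟨y1, hy1, hy1ne⟩ := Finset.exists_mem_ne
    (s := s.filter (fun y => y - 1 ∉ s)) (by omega) (upBot s)
  have hy1lt : y1 < upBot s := lt_of_le_of_ne (le_fmax hy1) hy1ne
  rw [Finset.mem_filter] at hy1
  have hBne : (s.filter (fun y => y < upBot s)).Nonempty :=
    ⟨y1, Finset.mem_filter.2 ⟨hy1.1, hy1lt⟩⟩
  have hlt : lowTop s ∈ s.filter (fun y => y < upBot s) := fmax_mem hBne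
  rw [Finset.mem_filter] at hlt
  exact ⟨hub'.1, hub'.2, hlt.1, hlt.2,
    fun y hy hylt => le_fmax (Finset.mem_filter.2 ⟨hy, hylt⟩)⟩

lemma upBot_interval {s : Finset ℤ} {y z : ℤ} (hz : z ∈ s) (h1 : upBot s ≤ y)
    (h2 : y ≤ z) : y ∈ s := by
  by_contra hy
  obtain ⟨w, hw1, hw2, hw3, hw4⟩ := exists_start hz
  have hyw : y < w := by
    by_contra hcon; push_neg at hcon; exact hy (hw4 y hcon h2)
  have : w ≤ upBot s := le_fmax (Finset.mem_filter.2 ⟨hw1, hw2⟩)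
  omega

lemma low_interval {s : Finset ℤ} (h2 : comps s = 2) {y : ℤ} (h1 : fmin s ≤ y)
    (hlt : y ≤ lowTop s) : y ∈ s := by
  obtain ⟨hub, hub', hlts, hltub, _⟩ := comps_two_facts h2
  by_contra hy
  obtain ⟨w, hw1, hw2, hw3, hw4⟩ := exists_start hlts
  have hyw : y < w := by
    by_contra hcon; push_neg at hcon; exact hy (hw4 y hcon hlt)
  have hne : s.Nonempty := ⟨_, hub⟩
  have hfm := fmin_mem_starts hne
  have hwm : w ∈ s.filter (fun y => y - 1 ∉ s) := Finset.mem_filter.2 ⟨hw1, hw2⟩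
  have hubm : upBot s ∈ s.filter (fun y => y - 1 ∉ s) := Finset.mem_filter.2 ⟨hub, hub'⟩
  have hfw : fmin s < w := by omega
  have hwub : w < upBot s := by omega
  have hsub : ({fmin s, w, upBot s} : Finset ℤ) ⊆ s.filter (fun y => y - 1 ∉ s) := by
    intro z hz
    simp only [Finset.mem_insert, Finset.mem_singleton] at hz
    rcases hz with h | h | h <;> subst h <;> assumption
  have hc3 : ({fmin s, w, upBot s} : Finset ℤ).card = 3 := by
    rw [Finset.card_insert_of_notMem (by simp; omega),
      Finset.card_insert_of_notMem (by simp; omega), Finset.card_singleton]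
  have hle := Finset.card_le_card hsub
  have hcc : (s.filter (fun y => y - 1 ∉ s)).card = 2 := h2
  omega

lemma mem_lower_or_upper {s : Finset ℤ} (h2 : comps s = 2) {y : ℤ} (hy : y ∈ s) :
    y ∈ lowerComp s ∨ y ∈ upperComp s := by
  obtain ⟨_, _, _, _, hle⟩ := comps_two_facts h2
  rcases lt_or_ge y (upBot s) with hc | hc
  · exact Or.inl (Finset.mem_filter.2 ⟨hy, hle _ hy hc⟩)
  · exact Or.inr (Finset.mem_filter.2 ⟨hy, hc⟩)

lemma hole_not_upper {s : Finset ℤ} {y : ℤ} (hy : y ∈ holeOf s) : y ∉ upperComp s := by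
  intro hc
  rw [holeOf, Finset.mem_Ioo] at hy
  rw [upperComp, Finset.mem_filter] at hc
  omega

lemma hole_not_lower {s : Finset ℤ} {y : ℤ} (hy : y ∈ holeOf s) : y ∉ lowerComp s := by
  intro hc
  rw [holeOf, Finset.mem_Ioo] at hy
  rw [lowerComp, Finset.mem_filter] at hc
  omega

lemma crossing_aux {P : Finset (ℤ × ℤ)} {x : ℤ} {a b : ℤ × ℤ}
    (h : Relation.ReflTransGen (fun u v => u ∈ P ∧ v ∈ P ∧ cellAdj u v) a b) :
    a.1 ≤ x → x < b.1 → ∃ y, (x, y) ∈ P ∧ (x + 1, y) ∈ P := by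
  induction h with
  | refl => intro h1 h2; omega
  | @tail c d hcd hstep ih =>
      intro h1 h2
      obtain ⟨hc, hd, hadj⟩ := hstep
      rcases le_or_gt c.1 x with hcx | hcx
      · rcases hadj with ⟨he, _⟩ | ⟨he2, he1⟩
        · omega
        · rcases he1 with he1 | he1
          · omega
          · have hx : c.1 = x := by omega
            refine ⟨c.2, ?_, ?_⟩
            · have : (x, c.2) = c := by rw [← hx]
              rwa [this]
            · have : (x + 1, c.2) = d := by
                have h3 : d.1 = x + 1 := by omega
                have h4 : d.2 = c.2 := he2.symm
                rw [← h3, ← h4]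
              rwa [this]
      · exact ih h1 hcx

lemma cross_cols {P : Finset (ℤ × ℤ)} (hP : IsPolyomino P) {x0 x1 x : ℤ}
    (h0 : (colP P x0).Nonempty) (h1 : (colP P x1).Nonempty)
    (hx : x0 ≤ x) (hx' : x < x1) : ∃ y, y ∈ colP P x ∧ y ∈ colP P (x + 1) := by
  obtain ⟨ya, hya⟩ := h0
  obtain ⟨yb, hyb⟩ := h1
  rw [mem_colP] at hya hyb
  obtain ⟨y, hy1, hy2⟩ := crossing_aux (hP.2 _ hya _ hyb) (by simpa) (by simpa)
  exact ⟨y, mem_colP.2 hy1, mem_colP.2 hy2⟩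

lemma colP_le_xmax {P : Finset (ℤ × ℤ)} {x : ℤ} (h : (colP P x).Nonempty) :
    x ≤ xmax P := by
  obtain ⟨y, hy⟩ := h
  rw [mem_colP] at hy
  exact le_fmax (Finset.mem_image.2 ⟨(x, y), hy, rfl⟩)

lemma exists_low_simplex {P : Finset (ℤ × ℤ)} (h : inS P) (hno : ¬ onlySimplexLast P) :
    ∃ x0, x0 < xmax P ∧ comps (colP P x0) = 1 := by
  unfold onlySimplexLast at hno
  push_neg at hno
  obtain ⟨x0, hx1, hx2⟩ := hno
  have hne : (colP P x0).Nonempty := nonempty_of_comps_ne (by omega)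
  exact ⟨x0, lt_of_le_of_ne (colP_le_xmax hne) hx2, hx1⟩

lemma ctx1 {P : Finset (ℤ × ℤ)} (h : inS P) (hno : ¬ onlySimplexLast P) :
    ∃ y, y ∈ colP P (xmax P - 1) ∧ y ∈ colP P (xmax P) := by
  obtain ⟨x0, hx0, hc0⟩ := exists_low_simplex h hno
  have h0ne : (colP P x0).Nonempty := nonempty_of_comps_ne (by omega)
  have hune : (colP P (xmax P)).Nonempty := nonempty_of_comps_ne (by have := h.2; omega)
  obtain ⟨y, hy1, hy2⟩ := cross_cols (x := xmax P - 1) h.1.1.1 h0ne hune (by omega) (by omega)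
  refine ⟨y, hy1, ?_⟩
  have e : xmax P - 1 + 1 = xmax P := by ring
  rwa [e] at hy2

lemma ctx2 {P : Finset (ℤ × ℤ)} (h : inS P) (hno : ¬ onlySimplexLast P)
    (h2 : comps (colP P (xmax P - 1)) = 2) :
    comps (colP P (xmax P - 2)) = 1 ∧
      ∃ y, y ∈ colP P (xmax P - 2) ∧ y ∈ colP P (xmax P - 1) := by
  obtain ⟨x0, hx0, hc0⟩ := exists_low_simplex h hno
  have hx0' : x0 ≤ xmax P - 2 := by
    rcases eq_or_lt_of_le (show x0 ≤ xmax P - 1 by omega) with he | hlt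
    · rw [he] at hc0; omega
    · omega
  have h0ne : (colP P x0).Nonempty := nonempty_of_comps_ne (by omega)
  have hune : (colP P (xmax P)).Nonempty := nonempty_of_comps_ne (by have := h.2; omega)
  obtain ⟨y, hy1, hy2⟩ := cross_cols h.1.1.1 h0ne hune hx0' (by omega)
  have e : xmax P - 2 + 1 = xmax P - 1 := by ring
  rw [e] at hy2
  have hle : comps (colP P (xmax P - 1 - 1)) ≤ 1 := (h.1.2 _ h2).2
  have e2 : xmax P - 1 - 1 = xmax P - 2 := by ring
  rw [e2] at hle
  have hpos : 0 < comps (colP P (xmax P - 2)) := comps_pos ⟨y, hy1⟩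
  exact ⟨by omega, y, hy1, hy2⟩

lemma snd_eq {P : Finset (ℤ × ℤ)} (h : inS P) (hno : ¬ onlySimplexLast P)
    (h2 : comps (colP P (xmax P - 1)) = 2) (h1 : comps (colP P (xmax P - 2)) = 1) :
    sndSimplexX P = xmax P - 2 := by
  have hmem : xmax P - 2 ∈
      (P.image Prod.fst).filter (fun x => x < xmax P ∧ comps (colP P x) = 1) := by
    refine Finset.mem_filter.2 ⟨?_, by omega, h1⟩
    obtain ⟨y, hy⟩ := nonempty_of_comps_ne (s := colP P (xmax P - 2)) (by omega)
    rw [mem_colP] at hy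
    exact Finset.mem_image.2 ⟨_, hy, rfl⟩
  have hub : ∀ z ∈ (P.image Prod.fst).filter (fun x => x < xmax P ∧ comps (colP P x) = 1),
      z ≤ xmax P - 2 := by
    intro z hz
    rw [Finset.mem_filter] at hz
    obtain ⟨_, hz1, hz2⟩ := hz
    have : z ≠ xmax P - 1 := by
      intro e; rw [e] at hz2; omega
    omega
  exact le_antisymm (hub _ (fmax_mem ⟨_, hmem⟩)) (le_fmax hmem)

lemma D_pure {s t : Finset ℤ} (h2 : comps s = 2) (h1 : comps t = 1)
    (hcross : ∃ y, y ∈ t ∧ y ∈ s) (hnL : ¬ ((lowerComp s) ∩ t).Nonempty) :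
    fmin t ∈ upperComp s ∨ fmin t ∈ holeOf s := by
  obtain ⟨hub, _, hlts, hltub, hle⟩ := comps_two_facts h2
  obtain ⟨y0, hy0t, hy0s⟩ := hcross
  have hy0U : upBot s ≤ y0 := by
    by_contra hc; push_neg at hc
    exact hnL ⟨y0, Finset.mem_inter.2 ⟨Finset.mem_filter.2 ⟨hy0s, hle _ hy0s hc⟩, hy0t⟩⟩
  have htne : t.Nonempty := ⟨_, hy0t⟩
  have hmt : fmin t ∈ t := fmin_mem htne
  have hmy0 : fmin t ≤ y0 := fmin_le hy0t
  have hmlt : lowTop s < fmin t := by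
    by_contra hc; push_neg at hc
    have hmem : lowTop s ∈ t := interval_of_comps_one h1 hmt hy0t hc (by omega)
    exact hnL ⟨lowTop s, Finset.mem_inter.2 ⟨Finset.mem_filter.2 ⟨hlts, le_refl _⟩, hmem⟩⟩
  rcases lt_or_ge (fmin t) (upBot s) with hcase | hcase
  · right; exact Finset.mem_Ioo.2 ⟨hmlt, hcase⟩
  · left; exact Finset.mem_filter.2 ⟨upBot_interval hy0s hcase hmy0, hcase⟩

lemma D'_pure {s t : Finset ℤ} (h2 : comps s = 2) (h1 : comps t = 1)
    (hcross : ∃ y, y ∈ t ∧ y ∈ s) (hnU : ¬ ((upperComp s) ∩ t).Nonempty) :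
    fmax t ∈ lowerComp s ∨ fmax t ∈ holeOf s := by
  obtain ⟨hub, _, hlts, hltub, hle⟩ := comps_two_facts h2
  obtain ⟨y0, hy0t, hy0s⟩ := hcross
  have hy0L : y0 ≤ lowTop s := by
    by_contra hc; push_neg at hc
    have hy0u : upBot s ≤ y0 := by
      rcases lt_or_ge y0 (upBot s) with hlt | hge
      · have := hle _ hy0s hlt; omega
      · exact hge
    exact hnU ⟨y0, Finset.mem_inter.2 ⟨Finset.mem_filter.2 ⟨hy0s, hy0u⟩, hy0t⟩⟩
  have htne : t.Nonempty := ⟨_, hy0t⟩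
  have hMt : fmax t ∈ t := fmax_mem htne
  have hy0M : y0 ≤ fmax t := le_fmax hy0t
  have hMub : fmax t < upBot s := by
    by_contra hc; push_neg at hc
    have hmem : upBot s ∈ t := interval_of_comps_one h1 hy0t hMt (by omega) hc
    exact hnU ⟨upBot s, Finset.mem_inter.2 ⟨Finset.mem_filter.2 ⟨hub, le_refl _⟩, hmem⟩⟩
  rcases le_or_gt (fmax t) (lowTop s) with hcase | hcase
  · left
    refine Finset.mem_filter.2 ⟨low_interval h2 ?_ hcase, hcase⟩
    exact le_trans (fmin_le hy0s) hy0M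
  · right; exact Finset.mem_Ioo.2 ⟨hcase, hMub⟩

open Classical in
/-- Canonical classification of an element of `S` into one of the twelve sets. -/
noncomputable def classify (P : Finset (ℤ × ℤ)) : Fin 12 :=
  if onlySimplexLast P then 0
  else if comps (colP P (xmax P - 1)) = 1 then
    (if lowPivot P ∈ P then 1 else 2)
  else if ¬ sharesEdge (lowerComp (colP P (xmax P - 1))) (colP P (xmax P - 2)) then
    (if (lowPivot P).2 ∈ upperComp (colP P (xmax P - 1)) then 3 else 4)
  else if ¬ sharesEdge (upperComp (colP P (xmax P - 1))) (colP P (xmax P - 2)) then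
    (if (upPivot P).2 ∈ lowerComp (colP P (xmax P - 1)) then 5 else 6)
  else if sharesEdge (colP P (xmax P)) (lowerComp (colP P (xmax P - 1))) then
    (if sharesEdge (colP P (xmax P)) (upperComp (colP P (xmax P - 1))) then 7
     else if lowInnerPivot P ∈ P then 9 else 8)
  else if upInnerPivot P ∈ P then 11 else 10

lemma Lshare_of_not_Ushare {P : Finset (ℤ × ℤ)} (h : inS P) (hno : ¬ onlySimplexLast P)
    (h2 : comps (colP P (xmax P - 1)) = 2)
    (hnU : ¬ sharesEdge (upperComp (colP P (xmax P - 1))) (colP P (xmax P - 2))) :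
    sharesEdge (lowerComp (colP P (xmax P - 1))) (colP P (xmax P - 2)) := by
  obtain ⟨_, yt, hyt1, hyt2⟩ := ctx2 h hno h2
  rcases mem_lower_or_upper h2 hyt2 with hl | hu
  · exact ⟨yt, Finset.mem_inter.2 ⟨hl, hyt1⟩⟩
  · exact absurd ⟨yt, Finset.mem_inter.2 ⟨hu, hyt1⟩⟩ hnU

lemma classify_mem {P : Finset (ℤ × ℤ)} (h : inS P) : twelveSets (classify P) P := by
  classical
  by_cases h0 : onlySimplexLast P
  · simp only [classify]
    rw [if_pos h0]
    exact ⟨h, h0⟩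
  simp only [classify]
  rw [if_neg h0]
  by_cases hc1 : comps (colP P (xmax P - 1)) = 1
  · rw [if_pos hc1]
    by_cases hlp : lowPivot P ∈ P
    · rw [if_pos hlp]; exact ⟨h, h0, hc1, hlp⟩
    · rw [if_neg hlp]; exact ⟨h, h0, hc1, hlp⟩
  rw [if_neg hc1]
  obtain ⟨ys, hys1, hys2⟩ := ctx1 h h0
  have hc2 : comps (colP P (xmax P - 1)) = 2 := by
    have hle := h.1.1.2 (xmax P - 1)
    have hpos := comps_pos ⟨ys, hys1⟩
    omega
  obtain ⟨ht1, yt, hyt1, hyt2⟩ := ctx2 h h0 hc2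
  have hsnd := snd_eq h h0 hc2 ht1
  have hlp2 : (lowPivot P).2 = fmin (colP P (xmax P - 2)) := by rw [lowPivot, hsnd]
  have hup2 : (upPivot P).2 = fmax (colP P (xmax P - 2)) := by rw [upPivot, hsnd]
  by_cases hL : sharesEdge (lowerComp (colP P (xmax P - 1))) (colP P (xmax P - 2))
  · rw [if_neg (not_not_intro hL)]
    by_cases hU : sharesEdge (upperComp (colP P (xmax P - 1))) (colP P (xmax P - 2))
    · rw [if_neg (not_not_intro hU)]
      by_cases hsl : sharesEdge (colP P (xmax P)) (lowerComp (colP P (xmax P - 1)))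
      · rw [if_pos hsl]
        by_cases hsu : sharesEdge (colP P (xmax P)) (upperComp (colP P (xmax P - 1)))
        · rw [if_pos hsu]; exact ⟨h, h0, hc2, ht1, hL, hU, hsl, hsu⟩
        · rw [if_neg hsu]
          by_cases hip : lowInnerPivot P ∈ P
          · rw [if_pos hip]; exact ⟨h, h0, hc2, ht1, hL, hU, hsl, hsu, hip⟩
          · rw [if_neg hip]; exact ⟨h, h0, hc2, ht1, hL, hU, hsl, hsu, hip⟩
      · rw [if_neg hsl]
        have hsu : sharesEdge (colP P (xmax P)) (upperComp (colP P (xmax P - 1))) := by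
          rcases mem_lower_or_upper hc2 hys1 with hl | hu
          · exact absurd (⟨ys, Finset.mem_inter.2 ⟨hys2, hl⟩⟩ :
              sharesEdge (colP P (xmax P)) (lowerComp (colP P (xmax P - 1)))) hsl
          · exact ⟨ys, Finset.mem_inter.2 ⟨hys2, hu⟩⟩
        by_cases hip : upInnerPivot P ∈ P
        · rw [if_pos hip]; exact ⟨h, h0, hc2, ht1, hL, hU, hsu, hsl, hip⟩
        · rw [if_neg hip]; exact ⟨h, h0, hc2, ht1, hL, hU, hsu, hsl, hip⟩
    · rw [if_pos hU]
      have hD := D'_pure hc2 ht1 ⟨yt, hyt1, hyt2⟩ hU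
      rw [← hup2] at hD
      by_cases hmem : (upPivot P).2 ∈ lowerComp (colP P (xmax P - 1))
      · rw [if_pos hmem]; exact ⟨h, h0, hc2, ht1, hU, hmem⟩
      · rw [if_neg hmem]; exact ⟨h, h0, hc2, ht1, hU, hD.resolve_left hmem⟩
  · rw [if_pos hL]
    have hD := D_pure hc2 ht1 ⟨yt, hyt1, hyt2⟩ hL
    rw [← hlp2] at hD
    by_cases hmem : (lowPivot P).2 ∈ upperComp (colP P (xmax P - 1))
    · rw [if_pos hmem]; exact ⟨h, h0, hc2, ht1, hL, hmem⟩
    · rw [if_neg hmem]; exact ⟨h, h0, hc2, ht1, hL, hD.resolve_left hmem⟩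

lemma classify_eq {P : Finset (ℤ × ℤ)} {i : Fin 12} (h : twelveSets i P) :
    inS P ∧ classify P = i := by
  classical
  fin_cases i
  · obtain ⟨hS, h0⟩ : Salpha P := h
    refine ⟨hS, ?_⟩
    simp only [classify]
    rw [if_pos h0]
    rfl
  · obtain ⟨hS, h0, hc1, hlp⟩ : Sbeta P := h
    refine ⟨hS, ?_⟩
    simp only [classify]
    rw [if_neg h0, if_pos hc1, if_pos hlp]
    rfl
  · obtain ⟨hS, h0, hc1, hlp⟩ : Sgamma P := h
    refine ⟨hS, ?_⟩
    simp only [classify]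
    rw [if_neg h0, if_pos hc1, if_neg hlp]
    rfl
  · obtain ⟨hS, h0, hc2, ht1, hnL, hmem⟩ : Sdelta P := h
    refine ⟨hS, ?_⟩
    simp only [classify]
    rw [if_neg h0, if_neg (by omega : ¬ comps (colP P (xmax P - 1)) = 1),
      if_pos hnL, if_pos hmem]
    rfl
  · obtain ⟨hS, h0, hc2, ht1, hnL, hmem⟩ : Sepsilon P := h
    refine ⟨hS, ?_⟩
    simp only [classify]
    rw [if_neg h0, if_neg (by omega : ¬ comps (colP P (xmax P - 1)) = 1),
      if_pos hnL, if_neg (hole_not_upper hmem)]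
    rfl
  · obtain ⟨hS, h0, hc2, ht1, hnU, hmem⟩ : Szeta P := h
    refine ⟨hS, ?_⟩
    have hL := Lshare_of_not_Ushare hS h0 hc2 hnU
    simp only [classify]
    rw [if_neg h0, if_neg (by omega : ¬ comps (colP P (xmax P - 1)) = 1),
      if_neg (not_not_intro hL), if_pos hnU, if_pos hmem]
    rfl
  · obtain ⟨hS, h0, hc2, ht1, hnU, hmem⟩ : Seta P := h
    refine ⟨hS, ?_⟩
    have hL := Lshare_of_not_Ushare hS h0 hc2 hnU
    simp only [classify]
    rw [if_neg h0, if_neg (by omega : ¬ comps (colP P (xmax P - 1)) = 1),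
      if_neg (not_not_intro hL), if_pos hnU, if_neg (hole_not_lower hmem)]
    rfl
  · obtain ⟨hS, h0, hc2, ht1, hL, hU, hsl, hsu⟩ : Stheta P := h
    refine ⟨hS, ?_⟩
    simp only [classify]
    rw [if_neg h0, if_neg (by omega : ¬ comps (colP P (xmax P - 1)) = 1),
      if_neg (not_not_intro hL), if_neg (not_not_intro hU), if_pos hsl, if_pos hsu]
    rfl
  · obtain ⟨hS, h0, hc2, ht1, hL, hU, hsl, hsu, hip⟩ : Siota P := h
    refine ⟨hS, ?_⟩
    simp only [classify]
    rw [if_neg h0, if_neg (by omega : ¬ comps (colP P (xmax P - 1)) = 1),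
      if_neg (not_not_intro hL), if_neg (not_not_intro hU), if_pos hsl, if_neg hsu,
      if_neg hip]
    rfl
  · obtain ⟨hS, h0, hc2, ht1, hL, hU, hsl, hsu, hip⟩ : Skappa P := h
    refine ⟨hS, ?_⟩
    simp only [classify]
    rw [if_neg h0, if_neg (by omega : ¬ comps (colP P (xmax P - 1)) = 1),
      if_neg (not_not_intro hL), if_neg (not_not_intro hU), if_pos hsl, if_neg hsu,
      if_pos hip]
    rfl
  · obtain ⟨hS, h0, hc2, ht1, hL, hU, hsu, hsl, hip⟩ : Slambda P := h
    refine ⟨hS, ?_⟩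
    simp only [classify]
    rw [if_neg h0, if_neg (by omega : ¬ comps (colP P (xmax P - 1)) = 1),
      if_neg (not_not_intro hL), if_neg (not_not_intro hU), if_neg hsl, if_neg hip]
    rfl
  · obtain ⟨hS, h0, hc2, ht1, hL, hU, hsu, hsl, hip⟩ : Smu P := h
    refine ⟨hS, ?_⟩
    simp only [classify]
    rw [if_neg h0, if_neg (by omega : ¬ comps (colP P (xmax P - 1)) = 1),
      if_neg (not_not_intro hL), if_neg (not_not_intro hU), if_neg hsl, if_pos hip]
    rfl

end Aux

/-- The twelve sets `S_α, S_β, ..., S_μ` form a partition of the set `S` of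
simplex-duplex polyominoes ending in a simplex column: their union is `S` and
they are pairwise disjoint. -/
theorem twelve_sets_partition :
    (∀ P : Finset (ℤ × ℤ), inS P ↔ ∃ i : Fin 12, twelveSets i P) ∧
    ∀ i j : Fin 12, i ≠ j → ∀ P : Finset (ℤ × ℤ),
      twelveSets i P → twelveSets j P → False := by
  constructor
  · intro P
    constructor
    · intro h
      exact ⟨classify P, classify_mem h⟩
    · rintro ⟨i, hi⟩
      exact (classify_eq hi).1
  · intro i j hij P hi hj
    exact hij (((classify_eq hi).2.symm).trans (classify_eq hj).2)
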